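/- arXiv:1011.6640 — 2 statements merged into one kernel-verified Lean document; each statement's English description precedes it below -/
import Mathlib

section
/- For any $\lambda > 0$ and any integer $n \geq 4\lambda^{-2}+1$, $P\{\chi^2_{n+1} < (n+1)(1-\lambda)\} \leq P\{\chi^2_n \leq n(1-\lambda)\}$. -/
/-!
Substituting `x = (n + 1) / n • y` turns the left side into the mass that
`n / (n + 1) • χ²_{n+1}`, a gamma law of shape `(n + 1) / 2` and rate `(n + 1) / (2 n)`, gives to
`(-∞, n (1 - λ))`. There its density is dominated by that of `χ²_n`: with `y = n t`, the log of
the density ratio is at most `(n / 2 + 1) log (1 + 1 / n) + (log t - t) / 2`, by log-convexity of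
`Γ` in the form `Γ(a) / Γ(a + 1/2) ≤ √(a + 1/2) / a`. Since `log t - t` increases on `(0, 1]` and
`log (1 - λ) ≤ -λ - λ² / 2`, this is at most `1 / n - λ² / 4 ≤ 0`.
-/

/-- The chi-square distribution with `n` degrees of freedom. -/
noncomputable def chiSqMeasure (n : ℕ) : MeasureTheory.Measure ℝ :=
  ProbabilityTheory.gammaMeasure (n / 2 : ℝ) (1 / 2 : ℝ)

open MeasureTheory ProbabilityTheory Real Set

theorem Real.log_one_sub_le_neg_add_sq_div_two {x : ℝ} (h₀ : 0 ≤ x) (h₁ : x < 1) :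
    log (1 - x) ≤ -(x + x ^ 2 / 2) := by
  have hsum := sum_le_hasSum (Finset.range 2) (fun i _ ↦ by positivity)
    (hasSum_pow_div_log_of_abs_lt_one (by rwa [abs_of_nonneg h₀]))
  norm_num [Finset.sum_range_succ] at hsum
  linarith

theorem Real.log_Gamma_sub_log_Gamma_add_half_le {x : ℝ} (hx : 0 < x) :
    log (Gamma x) - log (Gamma (x + 1 / 2)) ≤ log (x + 1 / 2) / 2 - log x := by
  have hx' : 0 < x + 1 / 2 := by linarith
  have hconv := convexOn_log_Gamma.2 (mem_Ioi.2 hx') (mem_Ioi.2 (by linarith : 0 < x + 3 / 2))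
    (by norm_num : (0 : ℝ) ≤ 1 / 2) (by norm_num : (0 : ℝ) ≤ 1 / 2) (by norm_num)
  have h1 : Gamma (x + 1) = x * Gamma x := Gamma_add_one hx.ne'
  have h32 : Gamma (x + 3 / 2) = (x + 1 / 2) * Gamma (x + 1 / 2) := by
    rw [show x + 3 / 2 = x + 1 / 2 + 1 by ring, Gamma_add_one hx'.ne']
  simp only [smul_eq_mul, Function.comp_apply,
    show 1 / 2 * (x + 1 / 2) + 1 / 2 * (x + 3 / 2) = x + 1 by ring, h1, h32] at hconv
  rw [log_mul hx.ne' (Gamma_pos_of_pos hx).ne',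
    log_mul hx'.ne' (Gamma_pos_of_pos hx').ne'] at hconv
  linarith

theorem Real.monotoneOn_log_sub_self : MonotoneOn (fun t ↦ log t - t) (Ioc 0 1) := by
  intro t ⟨ht, _⟩ c ⟨_, hc⟩ htc
  have hc0 : 0 < c := ht.trans_le htc
  have hlog := log_le_sub_one_of_pos (div_pos ht hc0)
  rw [log_div ht.ne' hc0.ne'] at hlog
  have : t / c - 1 ≤ t - c := by
    rw [div_sub_one hc0.ne', div_le_iff₀ hc0]; nlinarith
  dsimp only
  linarith

namespace ProbabilityTheory

theorem log_gammaPDFReal {a r x : ℝ} (ha : 0 < a) (hr : 0 < r) (hx : 0 < x) :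
    log (gammaPDFReal a r x) = a * log r - log (Gamma a) + (a - 1) * log x - r * x := by
  have hΓ := Gamma_pos_of_pos ha
  rw [gammaPDFReal, if_pos hx.le, log_mul (by positivity) (exp_pos _).ne', log_exp,
    log_mul (by positivity) (by positivity), log_div (by positivity) hΓ.ne',
    log_rpow hr, log_rpow hx]
  ring

theorem gammaPDFReal_mul_rate {a r k : ℝ} (hr : 0 ≤ r) (hk : 0 < k) (x : ℝ) :
    gammaPDFReal a (k * r) x = k * gammaPDFReal a r (k * x) := by
  by_cases hx : 0 ≤ x
  · have hkx : 0 ≤ k * x := mul_nonneg hk.le hx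
    rw [gammaPDFReal, gammaPDFReal, if_pos hx, if_pos hkx, mul_rpow hk.le hr,
      mul_rpow hk.le hx, rpow_sub_one hk.ne']
    field_simp
  · have hkx : ¬ 0 ≤ k * x := fun h ↦ hx (nonneg_of_mul_nonneg_right h hk)
    simp [gammaPDFReal, hx, hkx]

theorem gammaMeasure_preimage_mul {a r k : ℝ} (hr : 0 ≤ r) (hk : 0 < k) {s : Set ℝ}
    (hs : MeasurableSet s) :
    gammaMeasure a (k * r) ((k * ·) ⁻¹' s) = gammaMeasure a r s := by
  have hmeas : Measurable (gammaPDF a r) := (measurable_gammaPDFReal a r).ennreal_ofReal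
  rw [gammaMeasure, gammaMeasure, withDensity_apply _ (measurable_const_mul k hs),
    withDensity_apply _ hs]
  conv_rhs => rw [← smul_map_volume_mul_left hk.ne']
  rw [Measure.restrict_smul,
    lintegral_smul_measure, setLIntegral_map hs hmeas (measurable_const_mul k),
    abs_of_pos hk, smul_eq_mul, ← lintegral_const_mul' _ _ ENNReal.ofReal_ne_top]
  congr 1 with x
  rw [gammaPDF, gammaPDF, gammaPDFReal_mul_rate hr hk, ENNReal.ofReal_mul hk.le]

theorem gammaMeasure_le_of_gammaPDF_le {a r b q : ℝ} {s : Set ℝ} (hs : MeasurableSet s)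
    (h : ∀ x ∈ s, gammaPDF a r x ≤ gammaPDF b q x) :
    gammaMeasure a r s ≤ gammaMeasure b q s := by
  rw [gammaMeasure, gammaMeasure, withDensity_apply _ hs, withDensity_apply _ hs]
  exact setLIntegral_mono' hs h

theorem gammaPDFReal_chiSq_succ_rescaled_le {N lam y : ℝ} (hlam : 0 < lam)
    (h4 : 4 ≤ lam ^ 2 * N) (hy : 0 < y) (hyN : y ≤ N * (1 - lam)) :
    gammaPDFReal (N / 2 + 1 / 2) ((N + 1) / N * (1 / 2)) y ≤ gammaPDFReal (N / 2) (1 / 2) y := by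
  have hN : 0 < N := pos_of_mul_pos_right (by linarith) (sq_nonneg lam)
  have hlam1 : lam < 1 := by nlinarith
  obtain ⟨t, ht, rfl⟩ : ∃ t, 0 < t ∧ N * t = y := ⟨y / N, by positivity, by field_simp⟩
  have ht1 : t ≤ 1 - lam := le_of_mul_le_mul_left hyN hN
  rw [← log_le_log_iff (gammaPDFReal_pos (by positivity) (by positivity) hy)
    (gammaPDFReal_pos (by positivity) (by positivity) hy), log_gammaPDFReal (by positivity)
    (by positivity) hy, log_gammaPDFReal (by positivity) (by positivity) hy]
  have hGamma := log_Gamma_sub_log_Gamma_add_half_le (by positivity : 0 < N / 2)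
  have hlog_succ : (N / 2 + 1) * (log (N + 1) - log N) ≤ 1 / 2 + 1 / N := by
    have := log_le_sub_one_of_pos (by positivity : 0 < (N + 1) / N)
    rw [log_div (by positivity) hN.ne'] at this
    calc _ ≤ (N / 2 + 1) * ((N + 1) / N - 1) := by gcongr
      _ = 1 / 2 + 1 / N := by field_simp; ring
  have hlog_t :=
    monotoneOn_log_sub_self ⟨ht, ht1.trans (by linarith)⟩ ⟨by linarith, by linarith⟩ ht1
  have hlog_lam := log_one_sub_le_neg_add_sq_div_two hlam.le hlam1
  have hN_lam : 1 / N ≤ lam ^ 2 / 4 := by rw [div_le_div_iff₀ hN (by norm_num)]; linarith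
  have hrate : log ((N + 1) / N * (1 / 2)) = log (N + 1) - log N - log 2 := by
    rw [log_mul (by positivity) (by norm_num), log_div (by positivity) hN.ne', one_div, log_inv]
    ring
  have hshape : log (N / 2 + 1 / 2) = log (N + 1) - log 2 := by
    rw [show N / 2 + 1 / 2 = (N + 1) / 2 by ring, log_div (by positivity) (by norm_num)]
  rw [hshape, log_div hN.ne' (by norm_num)] at hGamma
  rw [hrate, one_div (2 : ℝ), log_inv, log_mul hN.ne' ht.ne',
    show (N + 1) / N * 2⁻¹ * (N * t) = N * t / 2 + t / 2 by field_simp]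
  linarith

theorem gammaPDF_chiSq_succ_rescaled_le {N lam y : ℝ} (hlam : 0 < lam) (h4 : 4 ≤ lam ^ 2 * N)
    (hyN : y ≤ N * (1 - lam)) :
    gammaPDF (N / 2 + 1 / 2) ((N + 1) / N * (1 / 2)) y ≤ gammaPDF (N / 2) (1 / 2) y := by
  rcases lt_trichotomy y 0 with hy | rfl | hy
  · simp [gammaPDF_of_neg hy]
  · have hN : 4 ≤ N := by nlinarith
    rw [gammaPDF_of_nonneg le_rfl, zero_rpow (by linarith : N / 2 + 1 / 2 - 1 ≠ 0)]
    simp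
  · exact ENNReal.ofReal_le_ofReal (gammaPDFReal_chiSq_succ_rescaled_le hlam h4 hy hyN)

end ProbabilityTheory

theorem chiSq_left_tail_mono (lam : ℝ) (hlam : 0 < lam)
    (n : ℕ) (hn : (4 / lam ^ 2 + 1 : ℝ) ≤ n) :
    chiSqMeasure (n + 1) {x : ℝ | x < (n + 1) * (1 - lam)} ≤
      chiSqMeasure n {x : ℝ | x ≤ n * (1 - lam)} := by
  have h4 : 4 ≤ lam ^ 2 * n := by
    rw [← div_le_iff₀' (by positivity)]
    linarith
  have hn0 : (0 : ℝ) < n := lt_of_lt_of_le (by positivity) hn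
  have hk : (0 : ℝ) < (n + 1) / n := by positivity
  have hpre :
      (((n : ℝ) + 1) / n * ·) ⁻¹' Iio ((n + 1) * (1 - lam)) = Iio (n * (1 - lam)) := by
    rw [preimage_const_mul_Iio₀ _ hk]
    field_simp
  calc chiSqMeasure (n + 1) {x : ℝ | x < (n + 1) * (1 - lam)}
      = gammaMeasure (n / 2 + 1 / 2) (1 / 2) (Iio ((n + 1) * (1 - lam))) := by
        rw [chiSqMeasure, Nat.cast_succ, add_div]; rfl
    _ = gammaMeasure (n / 2 + 1 / 2) ((n + 1) / n * (1 / 2)) (Iio (n * (1 - lam))) := by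
        rw [← hpre, gammaMeasure_preimage_mul (by norm_num) hk measurableSet_Iio]
    _ ≤ gammaMeasure (n / 2) (1 / 2) (Iio (n * (1 - lam))) :=
        gammaMeasure_le_of_gammaPDF_le measurableSet_Iio
          fun y hy ↦ gammaPDF_chiSq_succ_rescaled_le hlam h4 (le_of_lt hy)
    _ ≤ chiSqMeasure n {x : ℝ | x ≤ n * (1 - lam)} := measure_mono Iio_subset_Iic_self
end

section
/- For any integer $m \geq 1$ and real $t > 1$, if $\chi^2_m$ denotes a chi-square random variable with $m$ degrees of freedom, then $P\{\chi^2_m > m(1+\lambda)\} \leq \frac{1}{\lambda\sqrt{\pi m}} e^{-\frac{m}{2}(\lambda - \log(1+\lambda))}$ for every $\lambda > 0$. -/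
/-!
The density `x ^ (u - 1) * exp (-x / 2)` of `χ²_m` (with `u = m / 2`) is dominated on `(a, ∞)` by
an exponential: since `log` lies below its tangent line at `a`, for `u ≥ 1` one has
`x ^ (u - 1) ≤ a ^ (u - 1) * exp ((u - 1) * (x / a - 1))`, and for `u ≤ 1` simply
`x ^ (u - 1) ≤ a ^ (u - 1)`. Integrating this exponential over `(m (1 + λ), ∞)` leaves the factor
`(u / e) ^ u / Γ(u)`, which Stirling's lower bound `√(2πu) (u / e) ^ u ≤ Γ(u + 1)` controls. At the
half-integers `u = n - 1/2` the latter follows from Legendre's duplication formula, the lower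
bound `√π ≤ stirlingSeq (2n)` and Robbins' upper bound `stirlingSeq n ≤ √π exp (1 / (12 n))`.
-/

open Real Filter Topology Set MeasureTheory ProbabilityTheory Stirling
open scoped Nat

theorem Real.rpow_le_rpow_mul_exp {a x p c : ℝ} (ha : 0 < a) (hax : a ≤ x) (hc : 0 ≤ c)
    (hpc : p ≤ c) : x ^ p ≤ a ^ p * exp (c * (x / a - 1)) := by
  have hxa : 1 ≤ x / a := (one_le_div ha).mpr hax
  calc x ^ p = a ^ p * (x / a) ^ p := by
        rw [div_rpow (ha.trans_le hax).le ha.le, mul_div_cancel₀ _ (rpow_pos_of_pos ha p).ne']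
    _ ≤ a ^ p * (x / a) ^ c := by gcongr
    _ ≤ a ^ p * exp (x / a - 1) ^ c := by gcongr; linarith [add_one_le_exp (x / a - 1)]
    _ = a ^ p * exp (c * (x / a - 1)) := by rw [← exp_mul, mul_comm c]

theorem ProbabilityTheory.gammaMeasure_Ioi_le {α r a c : ℝ} (hα : 0 < α) (ha : 0 < a)
    (hc : 0 ≤ c) (hαc : α - 1 ≤ c) (hcr : c < r * a) :
    gammaMeasure α r (Ioi a) ≤
      ENNReal.ofReal ((r * a) ^ α * exp (-(r * a)) / (Gamma α * (r * a - c))) := by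
  have hr : 0 < r := (mul_pos_iff_of_pos_right ha).mp (hc.trans_lt hcr)
  have hG := Gamma_pos_of_pos hα
  set β := r - c / a with hβ_def
  have hβ : 0 < β := by rw [hβ_def, sub_pos, div_lt_iff₀ ha]; exact hcr
  set K := r ^ α / Gamma α * a ^ (α - 1) * exp (-c) with hK_def
  have hpdf : ∀ x ∈ Ioi a, gammaPDF α r x ≤ ENNReal.ofReal (K * exp (-(β * x))) := by
    intro x (hx : a < x)
    rw [gammaPDF_of_nonneg (ha.trans hx).le]
    refine ENNReal.ofReal_le_ofReal ?_
    have hexp : exp (c * (x / a - 1)) * exp (-(r * x)) = exp (-c) * exp (-(β * x)) := by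
      rw [← exp_add, ← exp_add, hβ_def]; congr 1; field_simp; ring
    calc r ^ α / Gamma α * x ^ (α - 1) * exp (-(r * x))
        ≤ r ^ α / Gamma α * (a ^ (α - 1) * exp (c * (x / a - 1))) * exp (-(r * x)) := by
          gcongr
          exact rpow_le_rpow_mul_exp ha hx.le hc hαc
      _ = K * exp (-(β * x)) := by rw [hK_def, mul_assoc, mul_assoc, hexp]; ring
  have hint : IntegrableOn (fun x ↦ K * exp (-(β * x))) (Ioi a) := by
    have := (exp_neg_integrableOn_Ioi a hβ).const_mul K
    simp only [neg_mul] at this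
    exact this
  have hintegral : ∫ x in Ioi a, K * exp (-(β * x)) =
      (r * a) ^ α * exp (-(r * a)) / (Gamma α * (r * a - c)) := by
    simp_rw [integral_const_mul, ← neg_mul]
    rw [integral_exp_mul_Ioi (by linarith), hK_def, hβ_def]
    have hexp : exp (-c) * exp (-(r - c / a) * a) = exp (-r * a) := by
      rw [← exp_add]; congr 1; field_simp; ring
    have hpow : a ^ (α - 1) * a = a ^ α := by rw [← rpow_add_one ha.ne']; simp
    rw [mul_rpow hr.le ha.le, ← hpow, ← hexp]
    field_simp
  rw [gammaMeasure, withDensity_apply _ measurableSet_Ioi, ← hintegral,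
    ofReal_integral_eq_lintegral_ofReal hint (ae_of_all _ fun x ↦ by positivity)]
  exact setLIntegral_mono (by fun_prop) hpdf

theorem Real.add_sq_div_two_le_neg_log_one_sub {x : ℝ} (h0 : 0 ≤ x) (h1 : x < 1) :
    x + x ^ 2 / 2 ≤ -log (1 - x) := by
  have := sum_le_hasSum (Finset.range 2) (fun i _ ↦ by positivity)
    (hasSum_pow_div_log_of_abs_lt_one (by rwa [abs_of_nonneg h0]))
  norm_num [Finset.sum_range_succ] at this
  exact this

theorem Stirling.stirlingSeq_le_sqrt_pi_mul_exp {n : ℕ} (hn : n ≠ 0) :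
    stirlingSeq n ≤ √π * exp (1 / (12 * n)) := by
  obtain ⟨n, rfl⟩ := Nat.exists_eq_succ_of_ne_zero hn
  -- Robbins' step bound `1 / (12 k (k + 1))` telescopes, so this sequence increases to `log √π`.
  set E : ℕ → ℝ := fun k ↦ log (stirlingSeq (k + 1)) - 1 / (12 * (k + 1 : ℕ))
  have hE : Monotone E := monotone_nat_of_le_succ fun k ↦ by
    have hstep := log_stirlingSeq_sdiff_le (k + 1)
    have h : (1 : ℝ) / (12 * (k + 1 : ℕ) * ((k + 1 : ℕ) + 1)) =
        1 / (12 * (k + 1 : ℕ)) - 1 / (12 * (k + 1 + 1 : ℕ)) := by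
      push_cast; field_simp; ring
    simp only [E]
    linarith
  have hlim : Tendsto E atTop (𝓝 (log √π - 0)) := by
    refine (((continuousAt_log (by positivity)).tendsto.comp
      (tendsto_stirlingSeq_sqrt_pi.comp (tendsto_add_atTop_nat 1))).sub ?_)
    simpa [div_eq_mul_inv] using tendsto_one_div_add_atTop_nhds_zero_nat.div_const (12 : ℝ)
  have hlog : log (stirlingSeq (n + 1)) ≤ log √π + 1 / (12 * (n + 1 : ℕ)) := by
    have := hE.ge_of_tendsto hlim n
    simp only [E] at this
    linarith
  calc stirlingSeq (n + 1) = exp (log (stirlingSeq (n + 1))) := (exp_log (stirlingSeq'_pos n)).symm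
    _ ≤ exp (log √π + 1 / (12 * (n + 1 : ℕ))) := exp_le_exp.mpr hlog
    _ = √π * exp (1 / (12 * (n.succ : ℕ))) := by rw [exp_add, exp_log (by positivity)]

theorem Real.Gamma_nat_add_half_mul_factorial (n : ℕ) :
    Gamma (n + 1 / 2) * n ! = (2 * n)! * √π / 4 ^ n := by
  have h := Gamma_mul_Gamma_add_half (n + 1 / 2)
  rw [show (n : ℝ) + 1 / 2 + 1 / 2 = n + 1 by ring,
    show 2 * ((n : ℝ) + 1 / 2) = (2 * n : ℕ) + 1 by push_cast; ring,
    Gamma_nat_eq_factorial, Gamma_nat_eq_factorial] at h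
  rw [h, show (1 : ℝ) - ((2 * n : ℕ) + 1) = -(2 * n : ℕ) by ring, rpow_neg zero_le_two,
    rpow_natCast, pow_mul]
  norm_num [div_eq_mul_inv, mul_right_comm]

theorem Real.Gamma_nat_add_half_eq_stirlingSeq {n : ℕ} (hn : n ≠ 0) :
    Gamma (n + 1 / 2) = √(2 * π) * (stirlingSeq (2 * n) / stirlingSeq n) * (n / exp 1) ^ n := by
  have hn' : (0 : ℝ) < n := by positivity
  rw [eq_div_iff (by positivity) |>.mpr (Gamma_nat_add_half_mul_factorial n)]
  have hsqrt : √(2 * (2 * n : ℕ)) = 2 * √n := by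
    push_cast
    rw [← mul_assoc, sqrt_mul (by norm_num), show (2 : ℝ) * 2 = 2 ^ 2 by ring, sqrt_sq zero_le_two]
  have hpow : ((2 * n : ℕ) / exp 1) ^ (2 * n) = 4 ^ n * ((n / exp 1) ^ n) ^ 2 := by
    rw [show (4 : ℝ) ^ n = 2 ^ (2 * n) by rw [pow_mul]; norm_num]
    push_cast; rw [mul_div_assoc, mul_pow]; ring
  simp only [stirlingSeq, hsqrt, hpow, sqrt_mul (show (0 : ℝ) ≤ 2 by norm_num)]
  field_simp
  exact (sq_sqrt zero_le_two).symm

theorem Real.sqrt_two_pi_mul_div_exp_rpow_le_Gamma_nat_add_half {n : ℕ} (hn : n ≠ 0) :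
    √(2 * π * (n - 1 / 2)) * ((n - 1 / 2) / exp 1) ^ ((n : ℝ) - 1 / 2) ≤ Gamma (n + 1 / 2) := by
  have hn' : (0 : ℝ) < n := by positivity
  have hn1 : (1 : ℝ) ≤ n := by exact_mod_cast Nat.one_le_iff_ne_zero.mpr hn
  set u : ℝ := n - 1 / 2 with hu_def
  have hu : 0 < u := by linarith
  have hratio : exp (-(1 / (12 * n))) ≤ stirlingSeq (2 * n) / stirlingSeq n := by
    rw [le_div_iff₀ ((by positivity : (0 : ℝ) < √π).trans_le (sqrt_pi_le_stirlingSeq hn))]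
    calc exp (-(1 / (12 * n))) * stirlingSeq n
        ≤ exp (-(1 / (12 * n))) * (√π * exp (1 / (12 * n))) := by
          gcongr; exact stirlingSeq_le_sqrt_pi_mul_exp hn
      _ = √π := by rw [mul_left_comm, ← exp_add]; simp
      _ ≤ stirlingSeq (2 * n) := sqrt_pi_le_stirlingSeq (by omega)
  -- `n log (1 - 1/(2n)) ≤ -1/2 - 1/(8n)`, and `1/(8n)` beats Robbins' `1/(12n)`.
  have hpow : (u / n) ^ n * exp (1 / 2) ≤ exp (-(1 / (12 * n))) := by
    have hx := add_sq_div_two_le_neg_log_one_sub (x := 1 / (2 * n)) (by positivity)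
      ((div_lt_one (by positivity)).mpr (by linarith))
    have hun : u / n = 1 - 1 / (2 * n) := by rw [hu_def]; field_simp
    have hsum : (n : ℝ) * (1 / (2 * n) + (1 / (2 * n)) ^ 2 / 2) = 1 / 2 + 1 / (8 * n) := by
      field_simp; ring
    have h8 : 1 / (12 * (n : ℝ)) ≤ 1 / (8 * n) := by gcongr; norm_num
    rw [← exp_log (pow_pos (div_pos hu hn') n), ← exp_add, exp_le_exp, log_pow, hun]
    nlinarith [mul_le_mul_of_nonneg_left hx hn'.le]
  have hLHS : √(2 * π * u) * (u / exp 1) ^ u =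
      √(2 * π) * (n / exp 1) ^ n * ((u / n) ^ n * exp (1 / 2)) := by
    have hsqrt : √u * u ^ u = u ^ n := by
      rw [sqrt_eq_rpow, ← rpow_add hu, show 1 / 2 + u = (n : ℕ) by rw [hu_def]; ring,
        rpow_natCast]
    have hexp : exp u = exp 1 ^ n / exp (1 / 2) := by
      rw [exp_one_pow, ← exp_sub, hu_def]
    rw [div_rpow hu.le (exp_pos 1).le, exp_one_rpow, sqrt_mul (by positivity), hexp, div_pow,
      div_pow]
    field_simp
    rw [← hsqrt]
  rw [hLHS, Gamma_nat_add_half_eq_stirlingSeq hn, mul_right_comm]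
  gcongr
  exact hpow.trans hratio

theorem Real.sqrt_two_pi_mul_div_exp_rpow_le_Gamma_half_add_one (m : ℕ) :
    √(2 * π * (m / 2)) * ((m / 2) / exp 1) ^ ((m : ℝ) / 2) ≤ Gamma (m / 2 + 1) := by
  obtain ⟨k, rfl | rfl⟩ := Nat.even_or_odd' m
  · have hk : ((2 * k : ℕ) : ℝ) / 2 = k := by push_cast; ring
    rw [hk, rpow_natCast, Gamma_nat_eq_factorial]
    exact le_factorial_stirling k
  · have hk : ((2 * k + 1 : ℕ) : ℝ) / 2 = (k + 1 : ℕ) - 1 / 2 := by push_cast; ring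
    rw [hk, show ((k + 1 : ℕ) : ℝ) - 1 / 2 + 1 = (k + 1 : ℕ) + 1 / 2 by ring]
    exact sqrt_two_pi_mul_div_exp_rpow_le_Gamma_nat_add_half k.succ_ne_zero

theorem Real.rpow_mul_exp_neg_div_Gamma_le {u lam c : ℝ} (hu : 0 < u) (hlam : 0 < lam)
    (hcu : c ≤ u) (hstirling : √(2 * π * u) * (u / exp 1) ^ u ≤ Gamma (u + 1)) :
    (u * (1 + lam)) ^ u * exp (-(u * (1 + lam))) / (Gamma u * (u * (1 + lam) - c)) ≤
      1 / (lam * √(2 * π * u)) * exp (-u * (lam - log (1 + lam))) := by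
  have hG := Gamma_pos_of_pos hu
  have hkey : lam * (√(2 * π * u) * (u / exp 1) ^ u) ≤ Gamma u * (u * (1 + lam) - c) := by
    rw [Gamma_add_one hu.ne'] at hstirling
    calc lam * (√(2 * π * u) * (u / exp 1) ^ u) ≤ lam * (u * Gamma u) := by gcongr
      _ ≤ Gamma u * (u * (1 + lam) - c) := by nlinarith
  have hlhs : (u * (1 + lam)) ^ u * exp (-(u * (1 + lam))) =
      (u / exp 1) ^ u * ((1 + lam) ^ u * exp (-(u * lam))) := by
    rw [mul_rpow hu.le (by linarith), div_rpow hu.le (exp_pos 1).le, exp_one_rpow,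
      show u * (1 + lam) = u + u * lam by ring, neg_add, exp_add, exp_neg u]
    ring
  have hrhs : exp (-u * (lam - log (1 + lam))) = (1 + lam) ^ u * exp (-(u * lam)) := by
    rw [rpow_def_of_pos (by linarith), ← exp_add]; ring_nf
  have hP : 0 < (1 + lam) ^ u * exp (-(u * lam)) := by positivity
  rw [hlhs, hrhs, one_div_mul_eq_div,
    div_le_div_iff₀ (mul_pos hG (by nlinarith)) (by positivity)]
  nlinarith [mul_le_mul_of_nonneg_left hkey hP.le]

theorem chiSq_right_tail_bound_general (m : ℕ) (hm : 1 ≤ m)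
    (lam : ℝ) (hlam : 0 < lam) :
    chiSqMeasure m {x : ℝ | m * (1 + lam) < x} ≤
      ENNReal.ofReal (1 / (lam * Real.sqrt (Real.pi * m)) *
        Real.exp (-(m / 2 : ℝ) * (lam - Real.log (1 + lam)))) := by
  set u : ℝ := m / 2 with hu_def
  have hu : 0 < u := div_pos (Nat.cast_pos.mpr hm) two_pos
  have htail := gammaMeasure_Ioi_le (r := 1 / 2) (a := m * (1 + lam)) (c := max (u - 1) 0) hu
    (by positivity) (le_max_right _ _) (le_max_left _ _)
    (by rw [max_lt_iff]; constructor <;> nlinarith)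
  rw [show 1 / 2 * (m * (1 + lam)) = u * (1 + lam) by ring] at htail
  refine htail.trans (ENNReal.ofReal_le_ofReal ?_)
  rw [show π * m = 2 * π * u by ring]
  exact rpow_mul_exp_neg_div_Gamma_le hu hlam (max_le (by linarith) hu.le)
    (sqrt_two_pi_mul_div_exp_rpow_le_Gamma_half_add_one m)

theorem chiSq_right_tail_bound (m : ℕ) (hm : 1 ≤ m) (t : ℝ) (ht : 1 < t)
    (lam : ℝ) (hlam : 0 < lam) :
    chiSqMeasure m {x : ℝ | m * (1 + lam) < x} ≤
      ENNReal.ofReal (1 / (lam * Real.sqrt (Real.pi * m)) *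
        Real.exp (-(m / 2 : ℝ) * (lam - Real.log (1 + lam)))) :=
  chiSq_right_tail_bound_general m hm lam hlam
end
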